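/- Assume ν_β is absolutely continuous with density h_β. For x∈I_β with h_β(x)>0, let m¹_x be the Borel probability measure on Σ determined on cylinders by m¹_x([a₁⋯a_n]) = (β/2)ⁿ h_β(T_{a₁⋯a_n}(x))/h_β(x). Then for ν_β-a.e. x the measure m¹_x is a probability measure supported on E_β(x), and the family (m¹_x) disintegrates m over ν_β: for every m-integrable f:Σ→ℝ, ∫_Σ f dm = ∫_{I_β} (∫ f dm¹_x) dν_β(x). Consequently m¹_x coincides ν_β-a.e. with the disintegration (m_x) of m by the fibres E_β(x). -/

import Mathlib

open MeasureTheory Filter Topology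
open scoped ENNReal Classical

noncomputable section

/-- The symbolic space `{0,1}^ℕ`. -/
abbrev Sig : Type := ℕ → Bool

/-- The metric `d(a,b) = 2^{-sup{n : a₁⋯a_n = b₁⋯b_n}}` on `Sig`. -/
noncomputable instance : MetricSpace Sig := PiNat.metricSpace

instance (priority := 2000) : MeasurableSpace Sig := borel Sig

instance : BorelSpace Sig := ⟨rfl⟩

/-- The cylinder set `[a₁⋯a_n]` determined by a word `w = a₁⋯a_n`. -/
def cyl (w : List Bool) : Set Sig := {b | ∀ i : Fin w.length, b i.1 = w.get i}

/-- `π_β(a) = Σ_{i=1}^∞ a_i β^{-i}`. -/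
def piBeta (β : ℝ) (a : Sig) : ℝ := ∑' i : ℕ, (if a i then (1 : ℝ) else 0) * (β ^ (i + 1))⁻¹

/-- `I_β = [0, 1/(β-1)]`. -/
def Ibeta (β : ℝ) : Set ℝ := Set.Icc 0 (β - 1)⁻¹

/-- The set `E_β(x) = π_β⁻¹(x)` of β-expansions of `x`. -/
def Ebeta (β : ℝ) (x : ℝ) : Set Sig := piBeta β ⁻¹' {x}

/-- `T_i(x) = βx - i` for `i = 0,1`. -/
def Tmap (β : ℝ) (b : Bool) (x : ℝ) : ℝ := β * x - (if b then 1 else 0)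

/-- `T_{a₁⋯a_n} = T_{a_n} ∘ ⋯ ∘ T_{a₁}`. -/
def Tword (β : ℝ) (w : List Bool) (x : ℝ) : ℝ := w.foldl (fun y b => Tmap β b y) x

/-- `s_β = log(2/β)/log 2`. -/
def sBeta (β : ℝ) : ℝ := Real.log (2 / β) / Real.log 2

/-- `m` is the uniform `(1/2,1/2)` Bernoulli measure: every cylinder of depth `n`
has measure `2^{-n}`. -/
def bernoulliCylProp (m : Measure Sig) : Prop :=
  ∀ w : List Bool, m (cyl w) = (2 : ℝ≥0∞)⁻¹ ^ w.length

/-- The disintegration property: `(mx x)` is a family of probability measures with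
`mx x` supported on `E_β(x)`, such that `∫ f dm = ∫∫ f d(mx x) dν_β(x)` for every
`m`-integrable `f`. -/
def IsDisintegration (β : ℝ) (m : Measure Sig) (mx : ℝ → Measure Sig) : Prop :=
  (∀ᵐ x ∂Measure.map (piBeta β) m,
      IsProbabilityMeasure (mx x) ∧ mx x (Ebeta β x)ᶜ = 0) ∧
  ∀ f : Sig → ℝ, Integrable f m →
    ∫ a, f a ∂m = ∫ x, (∫ a, f a ∂mx x) ∂Measure.map (piBeta β) m

/-!
Prepending a digit `i` to a sequence acts on `π_β` as `S_i = T_i⁻¹`, and `m` is the average of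
its images under the two prepending maps; hence `(S_i)_* ν_β ≪ ν_β`, and so `h_β(x) = 0` forces
`h_β(T_w x) = 0` for a.e. `x` and every word `w`. Therefore
`∫ m¹_x([w]) dν_β(x) = (β/2)ⁿ ∫ h_β ∘ T_w = 2⁻ⁿ = m([w])`, and since cylinders form a generating
π-system, `m = ∫ m¹_x dν_β(x)`, which is the disintegration identity. A sequence that is not a
β-expansion of `x` has a prefix `w` with `T_w x ∉ I_β`, where `h_β` vanishes, so `m¹_x` lives on
`E_β(x)`. Finally every disintegration satisfies `∫_B m_x([w]) dν_β = m([w] ∩ π_β⁻¹ B)`, which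
determines `m_x([w])`, hence `m_x`, for `ν_β`-a.e. `x`.
-/

open ProbabilityTheory

lemma cyl_eq_cylinder (w : List Bool) :
    cyl w = PiNat.cylinder (fun i => w.getD i false) w.length := by
  ext b
  simp only [cyl, PiNat.mem_cylinder_iff, Set.mem_ofPred_eq, Fin.forall_iff, List.get_eq_getElem]
  exact forall₂_congr fun i hi => by rw [List.getD_eq_getElem _ _ hi]

lemma mem_cyl_iff {w : List Bool} {b : Sig} :
    b ∈ cyl w ↔ ∀ i < w.length, b i = w.getD i false := by
  rw [cyl_eq_cylinder, PiNat.mem_cylinder_iff]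

@[simp] lemma cyl_nil : cyl [] = Set.univ := by
  simp [cyl_eq_cylinder]

lemma measurableSet_cyl (w : List Bool) : MeasurableSet (cyl w) := by
  rw [cyl_eq_cylinder]
  exact (PiNat.isOpen_cylinder (E := fun _ => Bool) _ _).measurableSet

def prefixWord (a : Sig) (n : ℕ) : List Bool := List.ofFn fun i : Fin n => a i

@[simp] lemma length_prefixWord (a : Sig) (n : ℕ) : (prefixWord a n).length = n := by
  simp [prefixWord]

lemma prefixWord_succ (a : Sig) (n : ℕ) : prefixWord a (n + 1) = prefixWord a n ++ [a n] := by
  simp only [prefixWord, List.ofFn_succ_last]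
  rfl

lemma cyl_prefixWord (a : Sig) (n : ℕ) : cyl (prefixWord a n) = PiNat.cylinder a n := by
  ext b
  simp only [mem_cyl_iff, PiNat.mem_cylinder_iff, length_prefixWord]
  refine forall₂_congr fun i hi => ?_
  rw [List.getD_eq_getElem _ _ (by simpa using hi)]
  simp [prefixWord]

lemma range_cyl : Set.range cyl = {s | ∃ (a : Sig) (n : ℕ), s = PiNat.cylinder a n} := by
  ext s
  constructor
  · rintro ⟨w, rfl⟩
    exact ⟨_, _, cyl_eq_cylinder w⟩
  · rintro ⟨a, n, rfl⟩
    exact ⟨_, cyl_prefixWord a n⟩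

lemma measurableSpace_eq_generateFrom_cyl :
    (inferInstance : MeasurableSpace Sig) = .generateFrom (Set.range cyl) := by
  rw [range_cyl]
  exact (PiNat.isTopologicalBasis_cylinders fun _ => Bool).borel_eq_generateFrom

lemma isPiSystem_range_cyl : IsPiSystem (Set.range cyl) := by
  rw [range_cyl]
  rintro _ ⟨a, n, rfl⟩ _ ⟨a', n', rfl⟩ ⟨b, hb, hb'⟩
  rw [← PiNat.mem_cylinder_iff_eq.1 hb, ← PiNat.mem_cylinder_iff_eq.1 hb']
  rcases le_total n n' with hle | hle
  · exact ⟨b, n', Set.inter_eq_right.2 (PiNat.cylinder_anti b hle)⟩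
  · exact ⟨b, n, Set.inter_eq_left.2 (PiNat.cylinder_anti b hle)⟩

lemma Measure.ext_of_cyl {μ μ' : Measure Sig} [IsFiniteMeasure μ]
    (h : ∀ w, μ (cyl w) = μ' (cyl w)) : μ = μ' :=
  ext_of_generate_finite _ measurableSpace_eq_generateFrom_cyl isPiSystem_range_cyl
    (by rintro _ ⟨w, rfl⟩; exact h w) (by simpa using h [])

def consDigit (b : Bool) (a : Sig) : Sig := fun i => Nat.casesOn i b a

@[simp] lemma consDigit_zero (b : Bool) (a : Sig) : consDigit b a 0 = b := rfl

@[simp] lemma consDigit_succ (b : Bool) (a : Sig) (i : ℕ) : consDigit b a (i + 1) = a i := rfl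

lemma measurable_consDigit (b : Bool) : Measurable (consDigit b) := by
  refine Continuous.measurable (continuous_pi fun i => ?_)
  cases i
  · exact continuous_const
  · exact continuous_apply _

lemma preimage_consDigit_cyl_cons (b c : Bool) (w : List Bool) :
    consDigit b ⁻¹' cyl (c :: w) = if b = c then cyl w else ∅ := by
  ext a
  simp only [Set.mem_preimage, mem_cyl_iff, List.length_cons, Nat.forall_lt_succ_left,
    consDigit_zero, List.getD_cons_zero, consDigit_succ, List.getD_cons_succ]
  split_ifs with hbc <;> simp [hbc, mem_cyl_iff]

section beta

variable {β : ℝ}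

lemma summable_inv_pow_succ (hβ : 1 < β) : Summable fun i : ℕ => (β ^ (i + 1))⁻¹ := by
  simpa [← inv_pow, pow_succ] using
    (summable_geometric_of_lt_one (by positivity) (inv_lt_one_of_one_lt₀ hβ)).mul_left β⁻¹

lemma summable_piBeta (hβ : 1 < β) (a : Sig) :
    Summable fun i : ℕ => (if a i then (1 : ℝ) else 0) * (β ^ (i + 1))⁻¹ := by
  refine (summable_inv_pow_succ hβ).of_nonneg_of_le (fun i => ?_) (fun i => ?_)
  · have : 0 < β := by linarith
    split_ifs <;> positivity
  · split_ifs <;> simp [(by positivity : (0 : ℝ) ≤ (β ^ (i + 1))⁻¹)]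

lemma continuous_piBeta (hβ : 1 < β) : Continuous (piBeta β) := by
  refine continuous_tsum (fun i => ?_) (summable_inv_pow_succ hβ) (fun i a => ?_)
  · exact (continuous_of_discreteTopology (f := fun v : Bool =>
      (if v then (1 : ℝ) else 0) * (β ^ (i + 1))⁻¹)).comp (continuous_apply i)
  · have : 0 < β := by linarith
    split_ifs <;> simp [abs_of_pos this, this.le]

lemma measurable_piBeta (hβ : 1 < β) : Measurable (piBeta β) :=
  (continuous_piBeta hβ).measurable

lemma piBeta_consDigit (hβ : 1 < β) (b : Bool) (a : Sig) :
    piBeta β (consDigit b a) = (piBeta β a + if b then 1 else 0) / β := by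
  rw [piBeta, (summable_piBeta hβ _).tsum_eq_zero_add, piBeta, add_div, div_eq_mul_inv,
    ← tsum_mul_right, add_comm]
  congr 1
  · exact tsum_congr fun i => by rw [pow_succ, mul_inv, ← mul_assoc]; rfl
  · simp only [zero_add, pow_one, div_eq_mul_inv]
    rfl

lemma Tword_append (w : List Bool) (b : Bool) (x : ℝ) :
    Tword β (w ++ [b]) x = Tmap β b (Tword β w x) := by
  simp [Tword]

lemma Tword_affine (w : List Bool) : ∃ c : ℝ, ∀ x, Tword β w x = β ^ w.length * x - c := by
  induction w with
  | nil => exact ⟨0, by simp [Tword]⟩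
  | cons b w ih =>
    obtain ⟨c, hc⟩ := ih
    refine ⟨β ^ w.length * (if b then 1 else 0) + c, fun x => ?_⟩
    simp only [Tword, List.foldl_cons] at hc ⊢
    rw [hc, Tmap, List.length_cons]
    ring

lemma measurable_Tword (w : List Bool) : Measurable (Tword β w) := by
  obtain ⟨c, hc⟩ := Tword_affine (β := β) w
  rw [funext hc]
  fun_prop

lemma Tword_prefixWord (hβ : β ≠ 0) (a : Sig) (x : ℝ) (n : ℕ) :
    Tword β (prefixWord a n) x
      = β ^ n * (x - ∑ i ∈ Finset.range n, (if a i then (1 : ℝ) else 0) * (β ^ (i + 1))⁻¹) := by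
  induction n with
  | zero => simp [prefixWord, Tword]
  | succ n ih =>
    rw [prefixWord_succ, Tword_append, ih, Tmap, Finset.sum_range_succ]
    field_simp
    ring

lemma piBeta_eq_of_forall_Tword_mem (hβ : 1 < β) {a : Sig} {x : ℝ}
    (H : ∀ n, Tword β (prefixWord a n) x ∈ Ibeta β) : piBeta β a = x := by
  have hβ0 : 0 < β := by linarith
  set P : ℕ → ℝ := fun n => ∑ i ∈ Finset.range n, (if a i then (1 : ℝ) else 0) * (β ^ (i + 1))⁻¹
  have hbound : ∀ n, |x - P n| ≤ (β - 1)⁻¹ * (β⁻¹) ^ n := by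
    intro n
    obtain ⟨h0, h1⟩ := H n
    rw [Tword_prefixWord hβ0.ne'] at h0 h1
    have hpow : 0 < β ^ n := by positivity
    rw [abs_of_nonneg (nonneg_of_mul_nonneg_right h0 hpow), inv_pow, ← div_eq_mul_inv,
      le_div_iff₀' hpow]
    exact h1
  have hgeom : Tendsto (fun n : ℕ => (β - 1)⁻¹ * (β⁻¹) ^ n) atTop (𝓝 0) := by
    simpa using (tendsto_pow_atTop_nhds_zero_of_lt_one (by positivity)
      (inv_lt_one_of_one_lt₀ hβ)).const_mul (β - 1)⁻¹
  have hP : Tendsto P atTop (𝓝 x) := by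
    simpa using (squeeze_zero_norm hbound hgeom).const_sub x
  exact tendsto_nhds_unique (summable_piBeta hβ a).hasSum.tendsto_sum_nat hP

end beta

section affine

variable {p : ℝ} (q : ℝ) (hp : p ≠ 0)
include hp

lemma map_volume_affine :
    Measure.map (fun y => p * y + q) volume = ENNReal.ofReal |p⁻¹| • volume := by
  rw [show (fun y : ℝ => p * y + q) = (· + q) ∘ (p * ·) from rfl,
    ← Measure.map_map (measurable_add_const q) (measurable_const_mul p),
    Real.map_volume_mul_left hp, Measure.map_smul, map_add_right_eq_self]

lemma quasiMeasurePreserving_affine :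
    Measure.QuasiMeasurePreserving (fun y => p * y + q) volume volume :=
  ⟨by fun_prop, by rw [map_volume_affine q hp]; exact Measure.smul_absolutelyContinuous⟩

lemma lintegral_comp_affine {f : ℝ → ℝ≥0∞} (hf : Measurable f) :
    ∫⁻ y, f (p * y + q) = ENNReal.ofReal |p⁻¹| * ∫⁻ y, f y := by
  rw [← lintegral_map hf (by fun_prop), map_volume_affine q hp, lintegral_smul_measure,
    smul_eq_mul]

end affine

lemma quasiMeasurePreserving_Tword {β : ℝ} (hβ : β ≠ 0) (w : List Bool) :
    Measure.QuasiMeasurePreserving (Tword β w) volume volume := by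
  obtain ⟨c, hc⟩ := Tword_affine (β := β) w
  simpa [funext hc, sub_eq_add_neg] using quasiMeasurePreserving_affine (-c) (pow_ne_zero _ hβ)

section bernoulli

variable {m : Measure Sig} (hm : bernoulliCylProp m)
include hm

lemma isProbabilityMeasure_of_bernoulliCylProp : IsProbabilityMeasure m :=
  ⟨by simpa using hm []⟩

lemma eq_inv_two_smul_map_consDigit_add :
    m = (2 : ℝ≥0∞)⁻¹ • m.map (consDigit false) + (2 : ℝ≥0∞)⁻¹ • m.map (consDigit true) := by
  have := isProbabilityMeasure_of_bernoulliCylProp hm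
  refine Measure.ext_of_cyl fun w => ?_
  simp only [Measure.add_apply, Measure.smul_apply, smul_eq_mul,
    Measure.map_apply (measurable_consDigit _) (measurableSet_cyl w)]
  cases w with
  | nil => simp [ENNReal.inv_two_add_inv_two]
  | cons c w => cases c <;> simp [preimage_consDigit_cyl_cons, hm _, pow_succ, mul_comm]

lemma map_consDigit_absolutelyContinuous (b : Bool) : m.map (consDigit b) ≪ m := by
  have hc : (2 : ℝ≥0∞)⁻¹ ≠ 0 := by simp
  conv_rhs => rw [eq_inv_two_smul_map_consDigit_add hm]
  cases b
  · exact (Measure.absolutelyContinuous_smul hc).add_right _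
  · exact (Measure.absolutelyContinuous_smul hc).add_right' _

end bernoulli

lemma ae_comp_eq_zero_of_map_absolutelyContinuous {α : Type*} [MeasurableSpace α]
    {μ : Measure α} {g : α → ℝ≥0∞} (hg : Measurable g) {S T : α → α} (hS : Measurable S)
    (hT : Measure.QuasiMeasurePreserving T μ μ) (hST : ∀ y, S (T y) = y)
    (hac : (μ.withDensity g).map S ≪ μ.withDensity g) :
    ∀ᵐ y ∂μ, g y = 0 → g (T y) = 0 := by
  have hpos : ∀ᵐ x ∂μ.withDensity g, g x ≠ 0 :=
    (ae_withDensity_iff hg).2 (ae_of_all _ fun _ hx => hx)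
  have hposS : ∀ᵐ x ∂μ, g x ≠ 0 → g (S x) ≠ 0 :=
    (ae_withDensity_iff hg).1 (ae_of_ae_map hS.aemeasurable (hac.ae_le hpos))
  filter_upwards [hT.ae hposS] with y hy hy0
  by_contra hne
  exact hy hne (by rwa [hST])

lemma lintegral_eq_one_of_map_eq_withDensity {α γ : Type*} [MeasurableSpace α]
    [MeasurableSpace γ] {μ : Measure α} [IsProbabilityMeasure μ] {ν : Measure γ} {f : α → γ}
    (hf : Measurable f) {g : γ → ℝ≥0∞} (hdens : μ.map f = ν.withDensity g) :
    ∫⁻ y, g y ∂ν = 1 := by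
  rw [← setLIntegral_univ, ← withDensity_apply _ .univ, ← hdens, Measure.map_apply hf .univ]
  simp

section selfSimilar

variable {β : ℝ} (hβ : 1 < β) {m : Measure Sig} (hm : bernoulliCylProp m)
include hβ hm

lemma map_map_piBeta_absolutelyContinuous (b : Bool) :
    (m.map (piBeta β)).map (fun y => (y + if b then 1 else 0) / β) ≪ m.map (piBeta β) := by
  have hcomp : (fun y => (y + if b then 1 else 0) / β) ∘ piBeta β = piBeta β ∘ consDigit b :=
    funext fun a => (piBeta_consDigit hβ b a).symm
  rw [Measure.map_map (by fun_prop) (measurable_piBeta hβ), hcomp,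
    ← Measure.map_map (measurable_piBeta hβ) (measurable_consDigit b)]
  exact (map_consDigit_absolutelyContinuous hm b).map (measurable_piBeta hβ)

variable {g : ℝ → ℝ≥0∞} (hg : Measurable g) (hdens : m.map (piBeta β) = volume.withDensity g)
include hg hdens

lemma ae_density_Tmap_eq_zero (b : Bool) : ∀ᵐ y, g y = 0 → g (Tmap β b y) = 0 := by
  have hβ0 : β ≠ 0 := by positivity
  refine ae_comp_eq_zero_of_map_absolutelyContinuous hg
    (S := fun y => (y + if b then 1 else 0) / β) (by fun_prop)
    (quasiMeasurePreserving_Tword hβ0 [b]) (fun y => ?_) ?_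
  · simp [Tmap, hβ0]
  · rw [← hdens]
    exact map_map_piBeta_absolutelyContinuous hβ hm b

lemma ae_density_Tword_eq_zero (w : List Bool) : ∀ᵐ x, g x = 0 → g (Tword β w x) = 0 := by
  induction w using List.reverseRecOn with
  | nil => exact ae_of_all _ fun x hx => hx
  | append_singleton w b ih =>
    have hstep := (quasiMeasurePreserving_Tword (by positivity) w).ae
      (ae_density_Tmap_eq_zero hβ hm hg hdens b)
    filter_upwards [ih, hstep] with x hw hb hx
    rw [Tword_append]
    exact hb (hw hx)

end selfSimilar

lemma integral_measure_comp {α γ E : Type*} [MeasurableSpace α] [MeasurableSpace γ]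
    [NormedAddCommGroup E] [NormedSpace ℝ E] {μ : Measure α} [SFinite μ] (κ : Kernel α γ)
    [IsSFiniteKernel κ] {f : γ → E} (hf : Integrable f (κ ∘ₘ μ)) :
    ∫ y, f y ∂(κ ∘ₘ μ) = ∫ x, ∫ y, f y ∂κ x ∂μ := by
  rw [Measure.comp_eq_comp_const_apply] at hf ⊢
  simpa using Kernel.integral_comp hf

section disintegration

variable {β : ℝ} (hβ : 1 < β) {m : Measure Sig}

lemma IsDisintegration.congr {μ μ' : ℝ → Measure Sig} (h : IsDisintegration β m μ)
    (hμ : ∀ᵐ x ∂m.map (piBeta β), μ x = μ' x) : IsDisintegration β m μ' :=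
  ⟨(h.1.and hμ).mono fun _ ⟨hx, heq⟩ => heq ▸ hx,
    fun f hf => (h.2 f hf).trans (integral_congr_ae (hμ.mono fun x hx => by simp only [hx]))⟩

lemma isDisintegration_of_lintegral_cyl [IsFiniteMeasure m] (κ : Kernel ℝ Sig) [IsMarkovKernel κ]
    (hsupp : ∀ᵐ x ∂m.map (piBeta β), κ x (Ebeta β x)ᶜ = 0)
    (hcyl : ∀ w, ∫⁻ x, κ x (cyl w) ∂m.map (piBeta β) = m (cyl w)) :
    IsDisintegration β m κ := by
  set ν := m.map (piBeta β)
  have hcomp : m = κ ∘ₘ ν := Measure.ext_of_cyl fun w => by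
    rw [Measure.bind_apply (measurableSet_cyl w) κ.aemeasurable, hcyl]
  refine ⟨hsupp.mono fun x hx => ⟨inferInstance, hx⟩, fun f hf => ?_⟩
  have h := integral_measure_comp κ (hcomp ▸ hf)
  rwa [← hcomp] at h

lemma measure_inter_preimage_piBeta {μ : Measure Sig} {x : ℝ} (hμ : μ (Ebeta β x)ᶜ = 0)
    (S : Set Sig) (B : Set ℝ) : μ (S ∩ piBeta β ⁻¹' B) = B.indicator (fun _ => μ S) x := by
  by_cases hx : x ∈ B
  · rw [Set.indicator_of_mem hx]
    refine measure_inter_conull (measure_mono_null (Set.compl_subset_compl.2 ?_) hμ)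
    rintro a (rfl : piBeta β a = x)
    exact hx
  · rw [Set.indicator_of_notMem hx]
    refine measure_mono_null ?_ hμ
    rintro a ⟨-, ha⟩ (rfl : piBeta β a = x)
    exact hx ha

variable [IsFiniteMeasure m]
include hβ

lemma IsDisintegration.setIntegral_eq {μ : ℝ → Measure Sig} (hμ : IsDisintegration β m μ)
    {S : Set Sig} (hS : MeasurableSet S) {B : Set ℝ} (hB : MeasurableSet B) :
    ∫ x in B, (μ x S).toReal ∂m.map (piBeta β) = m.real (S ∩ piBeta β ⁻¹' B) := by
  have hT : MeasurableSet (S ∩ piBeta β ⁻¹' B) := hS.inter (measurable_piBeta hβ hB)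
  have h := hμ.2 _ ((integrable_const (1 : ℝ)).indicator hT)
  rw [← Pi.one_def, integral_indicator_one hT] at h
  rw [h, ← integral_indicator hB]
  refine integral_congr_ae (hμ.1.mono fun x hx => ?_)
  dsimp only
  rw [integral_indicator_one hT, measureReal_def, measure_inter_preimage_piBeta hx.2]
  by_cases hxB : x ∈ B <;> simp [hxB]

lemma IsDisintegration.ae_eq (hpos : ∀ w, m (cyl w) ≠ 0) {μ₁ μ₂ : ℝ → Measure Sig}
    (h₁ : IsDisintegration β m μ₁) (h₂ : IsDisintegration β m μ₂) :
    ∀ᵐ x ∂m.map (piBeta β), μ₁ x = μ₂ x := by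
  -- a non-integrable function would have integral `0`, whereas here the integral is `m (cyl w)`
  have hint : ∀ μ, IsDisintegration β m μ → ∀ w,
      Integrable (fun x => (μ x (cyl w)).toReal) (m.map (piBeta β)) := fun μ hμ w =>
    Integrable.of_integral_ne_zero (by
      rw [← setIntegral_univ, hμ.setIntegral_eq hβ (measurableSet_cyl w) .univ]
      simp [measureReal_def, ENNReal.toReal_eq_zero_iff, hpos w])
  have hcyl : ∀ᵐ x ∂m.map (piBeta β), ∀ w, μ₁ x (cyl w) = μ₂ x (cyl w) := by
    refine ae_all_iff.2 fun w => ?_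
    have hreal := ae_eq_of_forall_setIntegral_eq_of_sigmaFinite
      (fun _ _ _ => (hint μ₁ h₁ w).integrableOn) (fun _ _ _ => (hint μ₂ h₂ w).integrableOn)
      (fun B hB _ => by
        rw [h₁.setIntegral_eq hβ (measurableSet_cyl w) hB,
          h₂.setIntegral_eq hβ (measurableSet_cyl w) hB])
    filter_upwards [hreal, h₁.1, h₂.1] with x hx ⟨_, _⟩ ⟨_, _⟩
    exact (ENNReal.toReal_eq_toReal_iff' (measure_ne_top _ _) (measure_ne_top _ _)).1 hx
  filter_upwards [hcyl, h₁.1] with x hx ⟨_, _⟩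
  exact Measure.ext_of_cyl hx

end disintegration

section fiber

variable {β : ℝ} {m : Measure Sig} {h : ℝ → ℝ} {m1 : ℝ → Measure Sig}
  (hm1 : ∀ x, 0 < h x → ∀ w : List Bool,
    m1 x (cyl w) = ENNReal.ofReal ((β / 2) ^ w.length * h (Tword β w x) / h x))
include hm1

lemma isProbabilityMeasure_of_density_pos {x : ℝ} (hx : 0 < h x) : IsProbabilityMeasure (m1 x) :=
  ⟨by simpa [Tword, hx.ne'] using hm1 x hx []⟩

lemma compl_Ebeta_null_of_density_pos (hβ : 1 < β) (hsupp : ∀ x ∉ Ibeta β, h x = 0) {x : ℝ}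
    (hx : 0 < h x) : m1 x (Ebeta β x)ᶜ = 0 := by
  have hsub : (Ebeta β x)ᶜ ⊆ ⋃ w ∈ {w | Tword β w x ∉ Ibeta β}, cyl w := by
    intro a ha
    obtain ⟨n, hn⟩ : ∃ n, Tword β (prefixWord a n) x ∉ Ibeta β := by
      by_contra! H
      exact ha (piBeta_eq_of_forall_Tword_mem hβ H)
    exact Set.mem_biUnion hn (by rw [cyl_prefixWord]; exact PiNat.self_mem_cylinder a n)
  refine measure_mono_null hsub ((measure_biUnion_null_iff (Set.to_countable _)).2 fun w hw => ?_)
  simp [hm1 x hx w, hsupp _ hw]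

omit hm1 in
/-- `m¹_x` is prescribed only where `h x > 0`, a `ν_β`-conull set; filling in `m` elsewhere
makes the family a Markov kernel. -/
def fiberMeasure (h : ℝ → ℝ) (m1 : ℝ → Measure Sig) (m : Measure Sig) (x : ℝ) : Measure Sig :=
  if 0 < h x then m1 x else m

lemma fiberMeasure_cyl (x : ℝ) (w : List Bool) :
    fiberMeasure h m1 m x (cyl w) = if 0 < h x
      then ENNReal.ofReal ((β / 2) ^ w.length * h (Tword β w x) / h x) else m (cyl w) := by
  unfold fiberMeasure
  split_ifs with hx
  · exact hm1 x hx w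
  · rfl

lemma measurable_fiberMeasure_cyl (hmeas : Measurable h) (w : List Bool) :
    Measurable fun x => fiberMeasure h m1 m x (cyl w) := by
  simp_rw [fiberMeasure_cyl hm1]
  exact Measurable.ite (measurableSet_lt measurable_const hmeas)
    ((measurable_const.mul (hmeas.comp (measurable_Tword w))).div hmeas).ennreal_ofReal
    measurable_const

variable [IsProbabilityMeasure m]

lemma isProbabilityMeasure_fiberMeasure (x : ℝ) : IsProbabilityMeasure (fiberMeasure h m1 m x) := by
  unfold fiberMeasure
  split_ifs with hx
  exacts [isProbabilityMeasure_of_density_pos hm1 hx, inferInstance]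

lemma measurable_fiberMeasure (hmeas : Measurable h) : Measurable (fiberMeasure h m1 m) :=
  have := isProbabilityMeasure_fiberMeasure (m := m) hm1
  .measure_of_isPiSystem_of_isProbabilityMeasure measurableSpace_eq_generateFrom_cyl
    isPiSystem_range_cyl (by rintro _ ⟨w, rfl⟩; exact measurable_fiberMeasure_cyl hm1 hmeas w)

end fiber

section density

variable {β : ℝ} (hβ : 1 < β) {m : Measure Sig} (hm : bernoulliCylProp m)
  {h : ℝ → ℝ} (hmeas : Measurable h)
  (hdens : m.map (piBeta β) = volume.withDensity fun x => ENNReal.ofReal (h x))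
  {m1 : ℝ → Measure Sig}
  (hm1 : ∀ x, 0 < h x → ∀ w : List Bool,
    m1 x (cyl w) = ENNReal.ofReal ((β / 2) ^ w.length * h (Tword β w x) / h x))
include hβ hm hmeas hdens hm1

lemma lintegral_fiberMeasure_cyl (w : List Bool) :
    ∫⁻ x, fiberMeasure h m1 m x (cyl w) ∂m.map (piBeta β) = m (cyl w) := by
  have hβ0 : 0 < β := by positivity
  have := isProbabilityMeasure_of_bernoulliCylProp hm
  have hg : Measurable fun x => ENNReal.ofReal (h x) := hmeas.ennreal_ofReal
  have hgT : Measurable fun x => ENNReal.ofReal (h (Tword β w x)) :=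
    (hmeas.comp (measurable_Tword w)).ennreal_ofReal
  obtain ⟨c, hc⟩ := Tword_affine (β := β) w
  have hchange : ∫⁻ x, ENNReal.ofReal (h (Tword β w x)) = ENNReal.ofReal (β ^ w.length)⁻¹ := by
    simp_rw [hc, sub_eq_add_neg]
    rw [lintegral_comp_affine _ (pow_ne_zero _ hβ0.ne') hg,
      lintegral_eq_one_of_map_eq_withDensity (measurable_piBeta hβ) hdens, mul_one,
      abs_of_pos (by positivity)]
  have hfiber : ∀ᵐ x, ENNReal.ofReal (h x) * fiberMeasure h m1 m x (cyl w)
      = ENNReal.ofReal ((β / 2) ^ w.length) * ENNReal.ofReal (h (Tword β w x)) := by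
    filter_upwards [ae_density_Tword_eq_zero hβ hm hg hdens w] with x hTw
    rw [fiberMeasure_cyl hm1, ← ENNReal.ofReal_mul (by positivity)]
    split_ifs with hx
    · rw [← ENNReal.ofReal_mul hx.le]
      congr 1
      field_simp
    · have h0 : ENNReal.ofReal (h x) = 0 := ENNReal.ofReal_eq_zero.2 (not_lt.1 hx)
      rw [h0, zero_mul, ENNReal.ofReal_mul (by positivity), hTw h0, mul_zero]
  rw [hdens, lintegral_withDensity_eq_lintegral_mul _ hg (measurable_fiberMeasure_cyl hm1 hmeas w)]
  simp only [Pi.mul_apply]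
  rw [lintegral_congr_ae hfiber, lintegral_const_mul _ hgT, hchange,
    ← ENNReal.ofReal_mul (by positivity), hm w, div_pow, div_mul_eq_mul_div, mul_inv_cancel₀
      (by positivity), ENNReal.ofReal_div_of_pos (by positivity)]
  simp [ENNReal.inv_pow]

lemma isDisintegration_of_density (hsupp : ∀ x ∉ Ibeta β, h x = 0) : IsDisintegration β m m1 := by
  have := isProbabilityMeasure_of_bernoulliCylProp hm
  have := isProbabilityMeasure_fiberMeasure (m := m) hm1
  have hpos : ∀ᵐ x ∂m.map (piBeta β), 0 < h x := by
    rw [hdens, ae_withDensity_iff hmeas.ennreal_ofReal]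
    exact ae_of_all _ fun x hx => ENNReal.ofReal_pos.1 (pos_iff_ne_zero.2 hx)
  let κ : Kernel ℝ Sig := ⟨fiberMeasure h m1 m, measurable_fiberMeasure hm1 hmeas⟩
  have : IsMarkovKernel κ := ⟨isProbabilityMeasure_fiberMeasure hm1⟩
  have hκ : ∀ᵐ x ∂m.map (piBeta β), κ x = m1 x :=
    hpos.mono fun x hx => if_pos hx
  refine (isDisintegration_of_lintegral_cyl κ ?_
    (lintegral_fiberMeasure_cyl hβ hm hmeas hdens hm1)).congr hκ
  filter_upwards [hκ, hpos] with x hx hxpos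
  rw [hx]
  exact compl_Ebeta_null_of_density_pos hm1 hβ hsupp hxpos

end density

theorem stmt2_general (β : ℝ) (hβ : β ∈ Set.Ioo (1 : ℝ) 2)
    (m : Measure Sig) (hm : bernoulliCylProp m)
    (h : ℝ → ℝ) (hmeas : Measurable h)
    (hsupp : ∀ x ∉ Ibeta β, h x = 0)
    (hdens : Measure.map (piBeta β) m
      = volume.withDensity fun x => ENNReal.ofReal (h x))
    (m1 : ℝ → Measure Sig)
    (hm1 : ∀ x, 0 < h x → ∀ w : List Bool,
      m1 x (cyl w)
        = ENNReal.ofReal ((β / 2) ^ w.length * h (Tword β w x) / h x)) :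
    IsDisintegration β m m1 ∧
    ∀ mx : ℝ → Measure Sig, IsDisintegration β m mx →
      ∀ᵐ x ∂Measure.map (piBeta β) m, mx x = m1 x := by
  have := isProbabilityMeasure_of_bernoulliCylProp hm
  have hdis := isDisintegration_of_density hβ.1 hm hmeas hdens hm1 hsupp
  exact ⟨hdis, fun mx hmx => hmx.ae_eq hβ.1 (fun w => by simp [hm w]) hdis⟩

/-- Assume `ν_β` is absolutely continuous with density `h_β`, and let
`m¹_x` be determined on cylinders by `m¹_x([a₁⋯a_n]) = (β/2)ⁿ h_β(T_{a₁⋯a_n}(x))/h_β(x)`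
(for `x` with `h_β(x) > 0`). Then for `ν_β`-a.e. `x` the measure `m¹_x` is a probability
measure supported on `E_β(x)`, the family `(m¹_x)` disintegrates `m` over `ν_β`, and
consequently `m¹_x` coincides `ν_β`-a.e. with any disintegration `(m_x)` of `m` by the
fibres `E_β(x)`. -/
theorem stmt2 (β : ℝ) (hβ : β ∈ Set.Ioo (1 : ℝ) 2)
    (m : Measure Sig) (hm : bernoulliCylProp m)
    (h : ℝ → ℝ) (hmeas : Measurable h) (hnonneg : ∀ x, 0 ≤ h x)
    (hsupp : ∀ x ∉ Ibeta β, h x = 0)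
    (hdens : Measure.map (piBeta β) m
      = volume.withDensity fun x => ENNReal.ofReal (h x))
    (m1 : ℝ → Measure Sig)
    (hm1 : ∀ x, 0 < h x → ∀ w : List Bool,
      m1 x (cyl w)
        = ENNReal.ofReal ((β / 2) ^ w.length * h (Tword β w x) / h x)) :
    IsDisintegration β m m1 ∧
    ∀ mx : ℝ → Measure Sig, IsDisintegration β m mx →
      ∀ᵐ x ∂Measure.map (piBeta β) m, mx x = m1 x :=
  stmt2_general β hβ m hm h hmeas hsupp hdens m1 hm1
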